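/- arXiv:1705.07474 — 4 statements merged into one kernel-verified Lean document; each statement's English description precedes it below -/
import Mathlib

section
/- Let X ∈ ℝ^{n×n} be any matrix and let 0 < ε < 1. Set r = ⌈72·log(2n+1)/ε²⌉ (natural logarithm). Then there exists a matrix Y ∈ ℝ^{n×n} with rank(Y) ≤ r such that ‖X − Y‖_max ≤ ε·‖X‖₂. -/
/-- The spectral norm (largest singular value) of a real square matrix, realized as the
operator norm of the associated linear map on Euclidean space. -/
noncomputable def matrixSpectralNorm (n : ℕ) (X : Matrix (Fin n) (Fin n) ℝ) : ℝ :=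
  ‖Matrix.toEuclideanCLM (𝕜 := ℝ) X‖

/-!
Write `σ = ‖X‖₂`. The block matrix `[[σ I, X], [Xᵀ, σ I]]` is positive semidefinite, hence the Gram
matrix of vectors `aᵢ, bⱼ` with `‖aᵢ‖² = ‖bⱼ‖² = σ` and `⟨aᵢ, bⱼ⟩ = Xᵢⱼ`. For a uniformly random
`r × k` sign matrix `P` and a fixed vector `v`, `‖P v‖²` lies within `(1 ± ε) r ‖v‖²` except with
probability `2 exp (-r ε² / 36)`. This is a Chernoff bound; the moment generating function of
`⟨s, v⟩²` is controlled by writing `exp (λ z²)` as a Gaussian average of `exp (2 √λ z g)` and using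
`cosh t ≤ exp (t² / 2)`. For `r ≥ 72 log (2n + 1) / ε²` a union bound over the `2n²` vectors
`aᵢ ± bⱼ` yields one `P` that works for all of them, and by polarization `Yᵢⱼ = ⟨P aᵢ, P bⱼ⟩ / r`,
a matrix of rank at most `r`, is within `ε σ` of `Xᵢⱼ`.
-/

namespace LowRankApprox

open Real Finset Matrix MeasureTheory

lemma exp_neg_le_one_sub_add_sq_div_two {v : ℝ} (hv : 0 ≤ v) :
    exp (-v) ≤ 1 - v + v ^ 2 / 2 := by
  rw [exp_neg, inv_le_iff_one_le_mul₀ (exp_pos v)]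
  calc (1 : ℝ) ≤ (1 + v + v ^ 2 / 2) * (1 - v + v ^ 2 / 2) := by nlinarith [sq_nonneg (v ^ 2)]
    _ ≤ exp v * (1 - v + v ^ 2 / 2) := by
      gcongr
      · nlinarith [sq_nonneg (v - 1)]
      · exact quadratic_le_exp_of_nonneg hv
    _ = (1 - v + v ^ 2 / 2) * exp v := mul_comm _ _

lemma one_le_one_sub_mul_exp_add_sq {u : ℝ} (h0 : 0 ≤ u) (h1 : u ≤ 1 / 5) :
    1 ≤ (1 - u) * exp (u + u ^ 2) := by
  have h := mul_le_mul_of_nonneg_left (quadratic_le_exp_of_nonneg (by positivity : 0 ≤ u + u ^ 2))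
    (by linarith : 0 ≤ 1 - u)
  nlinarith [mul_nonneg (mul_nonneg h0 h0) (mul_nonneg h0 (by linarith : 0 ≤ 1 / 5 - u))]

lemma integral_exp_neg_mul_sq_add_mul {b : ℝ} (hb : b ≠ 0) (a : ℝ) :
    ∫ x, exp (-b * x ^ 2 + a * x) = √(π / b) * exp (a ^ 2 / (4 * b)) := by
  have hsq (x : ℝ) : -b * x ^ 2 + a * x = -b * (x + -(a / (2 * b))) ^ 2 + a ^ 2 / (4 * b) := by
    field_simp; ring
  simp_rw [hsq, exp_add, integral_mul_const]
  rw [integral_add_right_eq_self (fun y => exp (-b * y ^ 2)), integral_gaussian]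

lemma integrable_exp_neg_mul_sq_add_mul {b : ℝ} (hb : 0 < b) (a : ℝ) :
    Integrable fun x => exp (-b * x ^ 2 + a * x) := by
  have hsq (x : ℝ) : -b * x ^ 2 + a * x = -b * (x + -(a / (2 * b))) ^ 2 + a ^ 2 / (4 * b) := by
    field_simp; ring
  simp_rw [hsq, exp_add]
  exact ((integrable_exp_neg_mul_sq hb).comp_add_right _).mul_const _

lemma exp_mul_sq_eq_integral {l : ℝ} (hl : 0 ≤ l) (z : ℝ) :
    exp (l * z ^ 2) = (√π)⁻¹ * ∫ g, exp (-1 * g ^ 2 + 2 * √l * z * g) := by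
  rw [integral_exp_neg_mul_sq_add_mul one_ne_zero, div_one, mul_pow, mul_pow, sq_sqrt hl,
    inv_mul_cancel_left₀ (sqrt_pos.2 pi_pos).ne']
  congr 1
  ring

lemma sqrt_inv_one_sub_two_mul_le_exp {l : ℝ} (h0 : 0 ≤ l) (h1 : l ≤ 1 / 10) :
    √((1 - 2 * l)⁻¹) ≤ exp (l + 2 * l ^ 2) := by
  rw [sqrt_le_left (exp_pos _).le, sq, ← exp_add, inv_le_iff_one_le_mul₀ (by linarith), mul_comm]
  refine (one_le_one_sub_mul_exp_add_sq (u := 2 * l) (by positivity) (by linarith)).trans_eq ?_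
  ring_nf

-- Sums over `s : ι → Bool` are `2 ^ card ι` times expectations over a uniformly random sign vector.
def signVec {ι : Type*} (s : ι → Bool) : ι → ℝ := fun i => if s i then 1 else -1

section Signs

variable {ι : Type*} [Fintype ι] [DecidableEq ι]

lemma sum_prod_signVec (g : ι → ℝ → ℝ) :
    ∑ s : ι → Bool, ∏ i, g i (signVec s i) = ∏ i, (g i 1 + g i (-1)) := by
  simp only [signVec]
  rw [← Fintype.prod_sum fun i (b : Bool) => g i (if b then 1 else -1)]
  simp

lemma sum_exp_mul_signVec_dotProduct_le (t : ℝ) (x : ι → ℝ) :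
    ∑ s : ι → Bool, exp (t * (signVec s ⬝ᵥ x)) ≤
      2 ^ Fintype.card ι * exp (t ^ 2 * (x ⬝ᵥ x) / 2) := by
  have hprod (s : ι → Bool) : exp (t * (signVec s ⬝ᵥ x)) = ∏ i, exp (t * x i * signVec s i) := by
    rw [← exp_sum, dotProduct, mul_sum]
    congr! 2 with i
    ring
  simp_rw [hprod, sum_prod_signVec fun i σ => exp (t * x i * σ)]
  calc ∏ i, (exp (t * x i * 1) + exp (t * x i * -1)) = ∏ i, 2 * cosh (t * x i) := by
        congr! 1 with i
        rw [cosh_eq]; ring_nf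
    _ ≤ ∏ i, 2 * exp ((t * x i) ^ 2 / 2) := by
        gcongr with i
        exact cosh_le_exp_half_sq _
    _ = 2 ^ Fintype.card ι * exp (t ^ 2 * (x ⬝ᵥ x) / 2) := by
        rw [prod_mul_distrib, prod_const, ← exp_sum, card_univ, dotProduct, mul_sum, sum_div]
        congr! 3 with i
        ring

lemma sum_signVec_mul_signVec (i j : ι) :
    ∑ s : ι → Bool, signVec s i * signVec s j = if i = j then 2 ^ Fintype.card ι else 0 := by
  have hprod (s : ι → Bool) : signVec s i * signVec s j =
      ∏ k, (if k = i then signVec s k else 1) * (if k = j then signVec s k else 1) := by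
    rw [prod_mul_distrib, prod_ite_eq' univ i, prod_ite_eq' univ j]
    simp
  simp_rw [hprod, sum_prod_signVec fun k σ => (if k = i then σ else 1) * (if k = j then σ else 1)]
  split_ifs with hij
  · subst hij
    rw [← card_univ, ← prod_const]
    congr! 1 with k
    split_ifs <;> norm_num
  · exact prod_eq_zero (mem_univ i) (by simp [hij])

lemma sum_signVec_dotProduct_sq (x : ι → ℝ) :
    ∑ s : ι → Bool, (signVec s ⬝ᵥ x) ^ 2 = 2 ^ Fintype.card ι * (x ⬝ᵥ x) := by
  have hexpand (s : ι → Bool) :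
      (signVec s ⬝ᵥ x) ^ 2 = ∑ i, ∑ j, signVec s i * signVec s j * (x i * x j) := by
    rw [sq, dotProduct, sum_mul_sum]
    congr! 2
    ring
  simp_rw [hexpand]
  rw [sum_comm]
  simp_rw [sum_comm (γ := ι → Bool), ← sum_mul, sum_signVec_mul_signVec]
  simp [dotProduct, mul_sum]

lemma sum_exp_mul_signVec_dotProduct_sq_le {x : ι → ℝ} (hx : x ⬝ᵥ x = 1) {l : ℝ} (h0 : 0 ≤ l)
    (h1 : l ≤ 1 / 10) :
    ∑ s : ι → Bool, exp (l * (signVec s ⬝ᵥ x) ^ 2) ≤ 2 ^ Fintype.card ι * exp (l + 2 * l ^ 2) := by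
  have hint (s : ι → Bool) :
      Integrable fun g => exp (-1 * g ^ 2 + 2 * √l * (signVec s ⬝ᵥ x) * g) :=
    integrable_exp_neg_mul_sq_add_mul one_pos _
  have hbound (g : ℝ) : ∑ s : ι → Bool, exp (-1 * g ^ 2 + 2 * √l * (signVec s ⬝ᵥ x) * g) ≤
      2 ^ Fintype.card ι * exp (-(1 - 2 * l) * g ^ 2) := by
    have hsplit (s : ι → Bool) : exp (-1 * g ^ 2 + 2 * √l * (signVec s ⬝ᵥ x) * g) =
        exp (-g ^ 2) * exp (2 * √l * g * (signVec s ⬝ᵥ x)) := by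
      rw [← exp_add]; ring_nf
    simp_rw [hsplit, ← mul_sum]
    calc exp (-g ^ 2) * ∑ s : ι → Bool, exp (2 * √l * g * (signVec s ⬝ᵥ x))
        ≤ exp (-g ^ 2) * (2 ^ Fintype.card ι * exp ((2 * √l * g) ^ 2 * (x ⬝ᵥ x) / 2)) := by
          gcongr; exact sum_exp_mul_signVec_dotProduct_le _ x
      _ = 2 ^ Fintype.card ι * exp (-(1 - 2 * l) * g ^ 2) := by
          rw [mul_left_comm, ← exp_add, hx, mul_pow, mul_pow, sq_sqrt h0]
          ring_nf
  have hl : 0 < 1 - 2 * l := by linarith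
  calc ∑ s : ι → Bool, exp (l * (signVec s ⬝ᵥ x) ^ 2)
      = (√π)⁻¹ * ∫ g, ∑ s : ι → Bool, exp (-1 * g ^ 2 + 2 * √l * (signVec s ⬝ᵥ x) * g) := by
        rw [integral_finsetSum _ fun s _ => hint s, mul_sum]
        simp_rw [exp_mul_sq_eq_integral h0]
    _ ≤ (√π)⁻¹ * ∫ g, 2 ^ Fintype.card ι * exp (-(1 - 2 * l) * g ^ 2) := by
        refine mul_le_mul_of_nonneg_left ?_ (by positivity)
        exact integral_mono (integrable_finsetSum _ fun s _ => hint s)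
          ((integrable_exp_neg_mul_sq hl).const_mul _) hbound
    _ = 2 ^ Fintype.card ι * √((1 - 2 * l)⁻¹) := by
        rw [integral_const_mul, integral_gaussian, sqrt_div' _ hl.le, sqrt_inv]
        field_simp
    _ ≤ 2 ^ Fintype.card ι * exp (l + 2 * l ^ 2) := by
        gcongr; exact sqrt_inv_one_sub_two_mul_le_exp h0 h1

lemma sum_signVec_dotProduct_pow_four_le {x : ι → ℝ} (hx : x ⬝ᵥ x = 1) :
    ∑ s : ι → Bool, (signVec s ⬝ᵥ x) ^ 4 ≤ 8 * 2 ^ Fintype.card ι := by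
  have hquad := sum_le_sum fun (s : ι → Bool) (_ : s ∈ univ) =>
    quadratic_le_exp_of_nonneg (by positivity : 0 ≤ 1 / 10 * (signVec s ⬝ᵥ x) ^ 2)
  have hmgf := sum_exp_mul_signVec_dotProduct_sq_le hx (l := 1 / 10) (by norm_num) le_rfl
  have hexp : exp (1 / 10 + 2 * (1 / 10) ^ 2) ≤ 25 / 22 := by
    convert exp_bound_div_one_sub_of_interval (x := 3 / 25) (by norm_num) (by norm_num) using 1
    all_goals norm_num
  have hsum : ∑ s : ι → Bool,
      (1 + 1 / 10 * (signVec s ⬝ᵥ x) ^ 2 + (1 / 10 * (signVec s ⬝ᵥ x) ^ 2) ^ 2 / 2) =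
      2 ^ Fintype.card ι * (11 / 10) + 1 / 200 * ∑ s : ι → Bool, (signVec s ⬝ᵥ x) ^ 4 := by
    have hterm (s : ι → Bool) :
        (1 / 10 * (signVec s ⬝ᵥ x) ^ 2) ^ 2 / 2 = 1 / 200 * (signVec s ⬝ᵥ x) ^ 4 := by ring
    simp_rw [hterm]
    rw [sum_add_distrib, sum_add_distrib, ← mul_sum, ← mul_sum, sum_signVec_dotProduct_sq, hx]
    simp only [sum_const, card_univ, Fintype.card_fun, Fintype.card_bool, nsmul_eq_mul,
      Nat.cast_pow, Nat.cast_ofNat]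
    ring
  have hpow : (0 : ℝ) ≤ 2 ^ Fintype.card ι := by positivity
  linarith [hsum ▸ hquad.trans hmgf, mul_le_mul_of_nonneg_left hexp hpow]

lemma sum_exp_neg_mul_signVec_dotProduct_sq_le {x : ι → ℝ} (hx : x ⬝ᵥ x = 1) {l : ℝ} (h0 : 0 ≤ l) :
    ∑ s : ι → Bool, exp (-(l * (signVec s ⬝ᵥ x) ^ 2)) ≤
      2 ^ Fintype.card ι * exp (-l + 4 * l ^ 2) := by
  have htaylor := sum_le_sum fun (s : ι → Bool) (_ : s ∈ univ) =>
    exp_neg_le_one_sub_add_sq_div_two (by positivity : 0 ≤ l * (signVec s ⬝ᵥ x) ^ 2)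
  have hsum : ∑ s : ι → Bool,
      (1 - l * (signVec s ⬝ᵥ x) ^ 2 + (l * (signVec s ⬝ᵥ x) ^ 2) ^ 2 / 2) =
      2 ^ Fintype.card ι * (1 - l) + l ^ 2 / 2 * ∑ s : ι → Bool, (signVec s ⬝ᵥ x) ^ 4 := by
    have hterm (s : ι → Bool) :
        (l * (signVec s ⬝ᵥ x) ^ 2) ^ 2 / 2 = l ^ 2 / 2 * (signVec s ⬝ᵥ x) ^ 4 := by ring
    simp_rw [hterm]
    rw [sum_add_distrib, sum_sub_distrib, ← mul_sum, ← mul_sum, sum_signVec_dotProduct_sq, hx]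
    simp only [sum_const, card_univ, Fintype.card_fun, Fintype.card_bool, nsmul_eq_mul,
      Nat.cast_pow, Nat.cast_ofNat]
    ring
  have hpow : (0 : ℝ) ≤ 2 ^ Fintype.card ι := by positivity
  calc _ ≤ 2 ^ Fintype.card ι * (1 - l) + l ^ 2 / 2 * ∑ s : ι → Bool, (signVec s ⬝ᵥ x) ^ 4 :=
        hsum ▸ htaylor
    _ ≤ 2 ^ Fintype.card ι * (1 + (-l + 4 * l ^ 2)) := by
        nlinarith [mul_le_mul_of_nonneg_left (sum_signVec_dotProduct_pow_four_le hx)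
          (by positivity : 0 ≤ l ^ 2 / 2)]
    _ ≤ 2 ^ Fintype.card ι * exp (-l + 4 * l ^ 2) := by
        gcongr; linarith [add_one_le_exp (-l + 4 * l ^ 2)]

end Signs

lemma card_filter_le_sum_le_exp_mul {κ α : Type*} [Fintype κ] [DecidableEq κ] [Fintype α]
    (f : α → ℝ) {l : ℝ} (hl : 0 ≤ l) (a : ℝ) :
    (#{S : κ → α | a ≤ ∑ k, f (S k)} : ℝ) ≤
      exp (-(l * a)) * (∑ x, exp (l * f x)) ^ Fintype.card κ := by
  calc (#{S : κ → α | a ≤ ∑ k, f (S k)} : ℝ)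
      = ∑ S ∈ {S : κ → α | a ≤ ∑ k, f (S k)}, 1 := by simp
    _ ≤ ∑ S ∈ {S : κ → α | a ≤ ∑ k, f (S k)}, exp (l * (∑ k, f (S k) - a)) :=
        sum_le_sum fun S hS => one_le_exp (mul_nonneg hl (sub_nonneg.2 (mem_filter.1 hS).2))
    _ ≤ ∑ S : κ → α, exp (l * (∑ k, f (S k) - a)) :=
        sum_le_sum_of_subset_of_nonneg (filter_subset _ _) fun _ _ _ => (exp_pos _).le
    _ = exp (-(l * a)) * ∑ S : κ → α, ∏ k, exp (l * f (S k)) := by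
        rw [mul_sum]
        congr! 1 with S
        rw [← exp_sum, ← exp_add, mul_sub, mul_sum]
        ring_nf
    _ = exp (-(l * a)) * (∑ x, exp (l * f x)) ^ Fintype.card κ := by
        rw [← Fintype.prod_sum fun _ x => exp (l * f x), prod_const, card_univ]

section Sketch

variable {ι κ : Type*} [Fintype ι] [Fintype κ]

def sketchSq (S : κ → ι → Bool) (x : ι → ℝ) : ℝ := ∑ k, (signVec (S k) ⬝ᵥ x) ^ 2

lemma sketchSq_eq_mulVec_dotProduct_mulVec (S : κ → ι → Bool) (x : ι → ℝ) :
    sketchSq S x = (Matrix.of (signVec ∘ S) *ᵥ x) ⬝ᵥ (Matrix.of (signVec ∘ S) *ᵥ x) := by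
  simp [sketchSq, dotProduct, mulVec, sq]

lemma sketchSq_smul (S : κ → ι → Bool) (c : ℝ) (x : ι → ℝ) :
    sketchSq S (c • x) = c ^ 2 * sketchSq S x := by
  simp_rw [sketchSq, dotProduct_smul, smul_eq_mul, mul_pow, mul_sum]

variable [DecidableEq ι] [DecidableEq κ]

lemma cast_card_fun_fun_bool :
    (Fintype.card (κ → ι → Bool) : ℝ) = (2 ^ Fintype.card ι) ^ Fintype.card κ := by
  simp

lemma card_sketchSq_ge_le {x : ι → ℝ} (hx : x ⬝ᵥ x = 1) {ε : ℝ} (hε0 : 0 < ε) (hε1 : ε < 1) :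
    (#{S : κ → ι → Bool | Fintype.card κ * (1 + ε) ≤ sketchSq S x} : ℝ) ≤
      exp (-(Fintype.card κ * ε ^ 2 / 36)) * Fintype.card (κ → ι → Bool) := by
  calc _ ≤ exp (-(ε / 12 * (Fintype.card κ * (1 + ε)))) *
        (∑ s : ι → Bool, exp (ε / 12 * (signVec s ⬝ᵥ x) ^ 2)) ^ Fintype.card κ :=
        card_filter_le_sum_le_exp_mul _ (by positivity) _
    _ ≤ exp (-(ε / 12 * (Fintype.card κ * (1 + ε)))) *
        (2 ^ Fintype.card ι * exp (ε / 12 + 2 * (ε / 12) ^ 2)) ^ Fintype.card κ := by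
        gcongr
        exact sum_exp_mul_signVec_dotProduct_sq_le hx (by positivity) (by linarith)
    _ = exp (Fintype.card κ * (-(5 / 72) * ε ^ 2)) * Fintype.card (κ → ι → Bool) := by
        rw [cast_card_fun_fun_bool, mul_pow, ← exp_nat_mul, mul_left_comm, ← exp_add]
        ring_nf
    _ ≤ exp (-(Fintype.card κ * ε ^ 2 / 36)) * Fintype.card (κ → ι → Bool) := by
        gcongr
        nlinarith [mul_nonneg (Nat.cast_nonneg (α := ℝ) (Fintype.card κ)) (sq_nonneg ε)]

lemma card_sketchSq_le_le {x : ι → ℝ} (hx : x ⬝ᵥ x = 1) {ε : ℝ} (hε0 : 0 < ε) :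
    (#{S : κ → ι → Bool | sketchSq S x ≤ Fintype.card κ * (1 - ε)} : ℝ) ≤
      exp (-(Fintype.card κ * ε ^ 2 / 36)) * Fintype.card (κ → ι → Bool) := by
  have hfilter : #{S : κ → ι → Bool | sketchSq S x ≤ Fintype.card κ * (1 - ε)} =
      #{S : κ → ι → Bool | -(Fintype.card κ * (1 - ε)) ≤ ∑ k, -(signVec (S k) ⬝ᵥ x) ^ 2} := by
    congr 1
    exact filter_congr fun S _ => by rw [sketchSq, sum_neg_distrib, neg_le_neg_iff]
  rw [hfilter]
  calc _ ≤ exp (-(ε / 8 * -(Fintype.card κ * (1 - ε)))) *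
        (∑ s : ι → Bool, exp (ε / 8 * -(signVec s ⬝ᵥ x) ^ 2)) ^ Fintype.card κ :=
        card_filter_le_sum_le_exp_mul _ (by positivity) _
    _ ≤ exp (-(ε / 8 * -(Fintype.card κ * (1 - ε)))) *
        (2 ^ Fintype.card ι * exp (-(ε / 8) + 4 * (ε / 8) ^ 2)) ^ Fintype.card κ := by
        gcongr
        simp_rw [mul_neg]
        exact sum_exp_neg_mul_signVec_dotProduct_sq_le hx (by positivity)
    _ = exp (Fintype.card κ * (-(1 / 16) * ε ^ 2)) * Fintype.card (κ → ι → Bool) := by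
        rw [cast_card_fun_fun_bool, mul_pow, ← exp_nat_mul, mul_left_comm, ← exp_add]
        ring_nf
    _ ≤ exp (-(Fintype.card κ * ε ^ 2 / 36)) * Fintype.card (κ → ι → Bool) := by
        gcongr
        nlinarith [mul_nonneg (Nat.cast_nonneg (α := ℝ) (Fintype.card κ)) (sq_nonneg ε)]

variable (κ) in
noncomputable def badSigns (ε : ℝ) (x : ι → ℝ) : Finset (κ → ι → Bool) :=
  {S | ε * Fintype.card κ * (x ⬝ᵥ x) < |sketchSq S x - Fintype.card κ * (x ⬝ᵥ x)|}

lemma badSigns_smul {c : ℝ} (hc : c ≠ 0) (ε : ℝ) (x : ι → ℝ) :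
    badSigns κ ε (c • x) = badSigns κ ε x := by
  ext S
  have hc2 : 0 < c ^ 2 := by positivity
  simp only [badSigns, mem_filter, mem_univ, true_and, sketchSq_smul, dotProduct_smul,
    smul_dotProduct, smul_eq_mul, ← mul_assoc, ← sq]
  rw [show ε * Fintype.card κ * c ^ 2 * (x ⬝ᵥ x) = c ^ 2 * (ε * Fintype.card κ * (x ⬝ᵥ x)) by ring,
    show c ^ 2 * sketchSq S x - Fintype.card κ * c ^ 2 * (x ⬝ᵥ x) =
      c ^ 2 * (sketchSq S x - Fintype.card κ * (x ⬝ᵥ x)) by ring,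
    abs_mul, abs_of_pos hc2]
  exact mul_lt_mul_iff_right₀ hc2

lemma card_badSigns_le_of_dotProduct_self_eq_one {x : ι → ℝ} (hx : x ⬝ᵥ x = 1) {ε : ℝ}
    (hε0 : 0 < ε) (hε1 : ε < 1) :
    (#(badSigns κ ε x) : ℝ) ≤
      2 * exp (-(Fintype.card κ * ε ^ 2 / 36)) * Fintype.card (κ → ι → Bool) := by
  have hsub : badSigns κ ε x ⊆ univ.filter (fun S => Fintype.card κ * (1 + ε) ≤ sketchSq S x) ∪
      univ.filter (fun S => sketchSq S x ≤ Fintype.card κ * (1 - ε)) := by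
    intro S hS
    simp only [badSigns, hx, mul_one, mem_filter, mem_univ, true_and, mem_union] at hS ⊢
    rcases lt_abs.1 hS with h | h
    · left; linarith
    · right; linarith
  calc (#(badSigns κ ε x) : ℝ)
      ≤ #{S : κ → ι → Bool | Fintype.card κ * (1 + ε) ≤ sketchSq S x} +
        #{S : κ → ι → Bool | sketchSq S x ≤ Fintype.card κ * (1 - ε)} := by
        exact_mod_cast (card_le_card hsub).trans (card_union_le _ _)
    _ ≤ _ := by
        linarith [card_sketchSq_ge_le (κ := κ) hx hε0 hε1, card_sketchSq_le_le (κ := κ) hx hε0]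

lemma card_badSigns_le (x : ι → ℝ) {ε : ℝ} (hε0 : 0 < ε) (hε1 : ε < 1) :
    (#(badSigns κ ε x) : ℝ) ≤
      2 * exp (-(Fintype.card κ * ε ^ 2 / 36)) * Fintype.card (κ → ι → Bool) := by
  by_cases hx : x = 0
  · have hempty : badSigns κ ε x = ∅ := by
      simp [badSigns, hx, sketchSq]
    rw [hempty, card_empty, Nat.cast_zero]
    positivity
  have hq : 0 < x ⬝ᵥ x := by
    simpa using dotProduct_self_star_pos_iff.2 hx
  set c := √(x ⬝ᵥ x)
  have hc : 0 < c := sqrt_pos.2 hq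
  have hunit : (c⁻¹ • x) ⬝ᵥ (c⁻¹ • x) = 1 := by
    rw [smul_dotProduct, dotProduct_smul, smul_eq_mul, smul_eq_mul, ← mul_assoc, ← sq, inv_pow,
      sq_sqrt hq.le, inv_mul_cancel₀ hq.ne']
  rw [← badSigns_smul (inv_ne_zero hc.ne')]
  exact card_badSigns_le_of_dotProduct_self_eq_one hunit hε0 hε1

theorem exists_matrix_forall_abs_mulVec_dotProduct_self_sub_le {Idx : Type*} [Fintype Idx]
    (v : Idx → ι → ℝ) {ε : ℝ} (hε0 : 0 < ε) (hε1 : ε < 1)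
    (hsmall : 2 * Fintype.card Idx * exp (-(Fintype.card κ * ε ^ 2 / 36)) < 1) :
    ∃ P : Matrix κ ι ℝ, ∀ p, |(P *ᵥ v p) ⬝ᵥ (P *ᵥ v p) - Fintype.card κ * (v p ⬝ᵥ v p)| ≤
      ε * Fintype.card κ * (v p ⬝ᵥ v p) := by
  obtain ⟨S, hS⟩ : ∃ S : κ → ι → Bool, ∀ p, S ∉ badSigns κ ε (v p) := by
    by_contra! hcover
    have hcard : (Fintype.card (κ → ι → Bool) : ℝ) ≤ ∑ p, (#(badSigns κ ε (v p)) : ℝ) := by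
      rw [← card_univ]
      exact_mod_cast (card_le_card fun S _ => mem_biUnion.2 (by simpa using hcover S)).trans
        card_biUnion_le
    have hbad := sum_le_sum fun p (_ : p ∈ univ) => card_badSigns_le (κ := κ) (v p) hε0 hε1
    rw [sum_const, card_univ, nsmul_eq_mul] at hbad
    have hpos : (0 : ℝ) < Fintype.card (κ → ι → Bool) := by exact_mod_cast Fintype.card_pos
    nlinarith
  refine ⟨Matrix.of (signVec ∘ S), fun p => ?_⟩
  simpa [badSigns, sketchSq_eq_mulVec_dotProduct_mulVec] using hS p

end Sketch

lemma abs_mulVec_dotProduct_mulVec_sub_le {κ ι : Type*} [Fintype κ] [Fintype ι]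
    (Q : Matrix κ ι ℝ) (c ε : ℝ) {u w : ι → ℝ}
    (hadd : |(Q *ᵥ (u + w)) ⬝ᵥ (Q *ᵥ (u + w)) - c * ((u + w) ⬝ᵥ (u + w))| ≤
      ε * c * ((u + w) ⬝ᵥ (u + w)))
    (hsub : |(Q *ᵥ (u - w)) ⬝ᵥ (Q *ᵥ (u - w)) - c * ((u - w) ⬝ᵥ (u - w))| ≤
      ε * c * ((u - w) ⬝ᵥ (u - w))) :
    |(Q *ᵥ u) ⬝ᵥ (Q *ᵥ w) - c * (u ⬝ᵥ w)| ≤ ε * c * (u ⬝ᵥ u + w ⬝ᵥ w) / 2 := by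
  simp only [mulVec_add, mulVec_sub, add_dotProduct, dotProduct_add, sub_dotProduct,
    dotProduct_sub, dotProduct_comm w u, dotProduct_comm (Q *ᵥ w) (Q *ᵥ u)] at hadd hsub
  rw [abs_le] at hadd hsub ⊢
  constructor <;> linarith [hadd.1, hadd.2, hsub.1, hsub.2]

lemma rank_of_dotProduct_le {R m n κ : Type*} [CommRing R] [StrongRankCondition R] [Fintype n]
    [Fintype κ] (f : m → κ → R) (g : n → κ → R) :
    (Matrix.of fun i j => f i ⬝ᵥ g j).rank ≤ Fintype.card κ := by
  have hmul : (Matrix.of fun i j => f i ⬝ᵥ g j) = Matrix.of f * (Matrix.of g)ᵀ := by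
    ext i j
    simp [mul_apply, dotProduct]
  rw [hmul]
  exact (rank_mul_le_left _ _).trans (rank_le_card_width _)

lemma _root_.Matrix.PosSemidef.exists_eq_dotProduct {m : Type*} [Fintype m] {M : Matrix m m ℝ}
    (hM : M.PosSemidef) : ∃ (k : ℕ) (g : m → Fin k → ℝ), ∀ p q, M p q = g p ⬝ᵥ g q := by
  obtain ⟨k, v, rfl⟩ := posSemidef_iff_eq_sum_vecMulVec.1 hM
  exact ⟨k, fun p i => v i p, fun p q => by simp [dotProduct, vecMulVec_apply, Matrix.sum_apply]⟩

lemma abs_dotProduct_mulVec_le_matrixSpectralNorm {n : ℕ} (X : Matrix (Fin n) (Fin n) ℝ)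
    (u w : Fin n → ℝ) : |u ⬝ᵥ X *ᵥ w| ≤ matrixSpectralNorm n X * √(u ⬝ᵥ u) * √(w ⬝ᵥ w) := by
  set T := toEuclideanCLM (n := Fin n) (𝕜 := ℝ) X
  have hnorm (v : Fin n → ℝ) : ‖(WithLp.toLp 2 v : EuclideanSpace ℝ (Fin n))‖ = √(v ⬝ᵥ v) := by
    rw [EuclideanSpace.norm_eq]
    simp [dotProduct, sq]
  have hinner : u ⬝ᵥ X *ᵥ w =
      inner ℝ (WithLp.toLp 2 u : EuclideanSpace ℝ (Fin n)) (T (WithLp.toLp 2 w)) := by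
    rw [toEuclideanCLM_toLp, EuclideanSpace.inner_eq_star_dotProduct]
    simp [dotProduct_comm]
  rw [hinner, ← hnorm, ← hnorm, mul_comm (matrixSpectralNorm n X), mul_assoc]
  exact (abs_real_inner_le_norm _ _).trans
    (mul_le_mul_of_nonneg_left (T.le_opNorm _) (norm_nonneg _))

lemma posSemidef_fromBlocks_matrixSpectralNorm {n : ℕ} (X : Matrix (Fin n) (Fin n) ℝ) :
    (fromBlocks (matrixSpectralNorm n X • 1) X Xᵀ (matrixSpectralNorm n X • 1)).PosSemidef := by
  set σ := matrixSpectralNorm n X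
  have hσ : 0 ≤ σ := norm_nonneg _
  refine .of_dotProduct_mulVec_nonneg ?_ fun v => ?_
  · exact IsHermitian.fromBlocks (by simp [IsHermitian]) (by simp) (by simp [IsHermitian])
  obtain ⟨u, w, rfl⟩ : ∃ u w, v = Sum.elim u w := ⟨_, _, (Sum.elim_comp_inl_inr v).symm⟩
  rw [fromBlocks_mulVec, star_trivial, Sum.elim_comp_inl, Sum.elim_comp_inr,
    sumElim_dotProduct_sumElim]
  have hbound := abs_le.1 (abs_dotProduct_mulVec_le_matrixSpectralNorm X u w)
  have hu := sq_sqrt (dotProduct_self_star_nonneg u)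
  have hw := sq_sqrt (dotProduct_self_star_nonneg w)
  simp only [star_trivial] at hu hw
  simp only [smul_mulVec, one_mulVec, dotProduct_add, dotProduct_smul, smul_eq_mul,
    mulVec_transpose, dotProduct_comm w (u ᵥ* X), ← dotProduct_mulVec]
  nlinarith [mul_nonneg hσ (sq_nonneg (√(u ⬝ᵥ u) - √(w ⬝ᵥ w)))]

lemma exists_balanced_factorization {n : ℕ} (X : Matrix (Fin n) (Fin n) ℝ) :
    ∃ (k : ℕ) (a b : Fin n → Fin k → ℝ), (∀ i j, a i ⬝ᵥ b j = X i j) ∧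
      (∀ i, a i ⬝ᵥ a i = matrixSpectralNorm n X) ∧ ∀ j, b j ⬝ᵥ b j = matrixSpectralNorm n X := by
  obtain ⟨k, g, hg⟩ := (posSemidef_fromBlocks_matrixSpectralNorm X).exists_eq_dotProduct
  exact ⟨k, g ∘ Sum.inl, g ∘ Sum.inr, fun i j => by simp [← hg], fun i => by simp [← hg],
    fun j => by simp [← hg]⟩

lemma four_mul_sq_mul_exp_neg_lt_one {n r : ℕ} {ε : ℝ} (hε0 : 0 < ε)
    (hr : 72 * log (2 * n + 1) / ε ^ 2 ≤ r) :
    4 * (n : ℝ) ^ 2 * exp (-(r * ε ^ 2 / 36)) < 1 := by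
  have hpos : (0 : ℝ) < 2 * n + 1 := by positivity
  have hexp : exp (-(r * ε ^ 2 / 36)) ≤ ((2 * n + 1 : ℝ) ^ 2)⁻¹ := by
    rw [div_le_iff₀ (by positivity)] at hr
    calc exp (-(r * ε ^ 2 / 36)) ≤ exp (-(log (2 * n + 1) + log (2 * n + 1))) :=
          exp_le_exp.2 (by linarith)
      _ = ((2 * n + 1 : ℝ) ^ 2)⁻¹ := by rw [Real.exp_neg, exp_add, exp_log hpos, sq]
  calc 4 * (n : ℝ) ^ 2 * exp (-(r * ε ^ 2 / 36)) ≤ 4 * n ^ 2 * ((2 * n + 1 : ℝ) ^ 2)⁻¹ := by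
        gcongr
    _ < 1 := by
        rw [← div_eq_mul_inv, div_lt_one (by positivity)]
        nlinarith

end LowRankApprox

open LowRankApprox Matrix

/-- **Theorem 0.** Any `n × n` real matrix `X` can be approximated, entrywise to within
`ε‖X‖₂`, by a matrix of rank at most `⌈72 log(2n+1)/ε²⌉`. -/
theorem low_rank_max_norm_approx (n : ℕ) (X : Matrix (Fin n) (Fin n) ℝ)
    (ε : ℝ) (hε0 : 0 < ε) (hε1 : ε < 1)
    (r : ℕ) (hr : r = ⌈72 * Real.log (2 * (n : ℝ) + 1) / ε ^ 2⌉₊) :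
    ∃ Y : Matrix (Fin n) (Fin n) ℝ,
      Y.rank ≤ r ∧ ∀ i j, |X i j - Y i j| ≤ ε * matrixSpectralNorm n X := by
  obtain ⟨k, a, b, hab, haa, hbb⟩ := exists_balanced_factorization X
  obtain ⟨P, hP⟩ := exists_matrix_forall_abs_mulVec_dotProduct_self_sub_le (κ := Fin r)
    (fun p : Fin n × Fin n × Bool => if p.2.2 then a p.1 + b p.2.1 else a p.1 - b p.2.1) hε0 hε1
    (by
      simp only [Fintype.card_prod, Fintype.card_fin, Fintype.card_bool]
      push_cast
      linarith [four_mul_sq_mul_exp_neg_lt_one hε0 (hr ▸ Nat.le_ceil _)])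
  refine ⟨of fun i j => ((r : ℝ)⁻¹ • P *ᵥ a i) ⬝ᵥ (P *ᵥ b j),
    (rank_of_dotProduct_le _ _).trans_eq (Fintype.card_fin r), fun i j => ?_⟩
  have hr0 : (0 : ℝ) < r := by
    have hn : (1 : ℝ) ≤ n := by exact_mod_cast i.pos
    rw [hr, Nat.cast_pos, Nat.ceil_pos]
    have := Real.log_pos (by linarith : (1 : ℝ) < 2 * n + 1)
    positivity
  have hpol := abs_mulVec_dotProduct_mulVec_sub_le P r ε (by simpa using hP (i, j, true))
    (by simpa using hP (i, j, false))
  rw [haa, hbb, hab] at hpol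
  have hY : ((r : ℝ)⁻¹ • P *ᵥ a i) ⬝ᵥ (P *ᵥ b j) - X i j =
      (r : ℝ)⁻¹ * ((P *ᵥ a i) ⬝ᵥ (P *ᵥ b j) - r * X i j) := by
    rw [smul_dotProduct, smul_eq_mul, mul_sub, inv_mul_cancel_left₀ hr0.ne']
  rw [of_apply, abs_sub_comm, hY, abs_mul, abs_of_pos (inv_pos.2 hr0)]
  calc (r : ℝ)⁻¹ * |(P *ᵥ a i) ⬝ᵥ (P *ᵥ b j) - r * X i j|
      ≤ (r : ℝ)⁻¹ * (ε * r * (matrixSpectralNorm n X + matrixSpectralNorm n X) / 2) := by gcongr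
    _ = ε * matrixSpectralNorm n X := by field_simp; ring
end

section
/- (Johnson–Lindenstrauss Lemma) Let 0 < ε < 1, let x₁, …, x_n be n points in ℝ^N, and let r = ⌈8·(log n)/ε²⌉ (natural logarithm). Then there is a linear map Q : ℝ^N → ℝ^r such that for all 1 ≤ i, j ≤ n, (1−ε)·‖x_i − x_j‖² ≤ ‖Q(x_i − x_j)‖² ≤ (1+ε)·‖x_i − x_j‖². -/
/-!
Take the rows `ω₁, …, ω_r` of a random `r × N` matrix to be independent standard Gaussian vectors.
For a unit vector `u` the `⟪ωᵢ, u⟫` are independent standard Gaussians, so `Z = ∑ᵢ ⟪ωᵢ, u⟫²` has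
moment generating function `(1 - 2s)^(-r/2)`, and the Chernoff bound gives
`P(Z ≥ c r), P(Z ≤ c r) ≤ exp (-(r/2) (c - 1 - log c))` for `c ≥ 1`, resp. `c ≤ 1`.
Rescale the matrix by `1/√(a r)` and take `c = a (1 ± ε)`, where
`a = (log (1 + ε) - log (1 - ε)) / (2ε)` makes the two exponents equal; their sum is at least `ε²`,
so a fixed difference `xᵢ - xⱼ` is distorted with probability at most `2 exp (-r ε²/4) ≤ 2/n²`.
A union bound over the `n(n-1)/2` pairs leaves a positive probability of success.
-/

open MeasureTheory ProbabilityTheory Real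
open scoped RealInnerProductSpace

section ApproxIsometric

variable {E F : Type*} [SeminormedAddCommGroup E] [SeminormedAddCommGroup F] [Module ℝ E]
  [Module ℝ F]

def ApproxIsometricAt (ε : ℝ) (Q : E →ₗ[ℝ] F) (v : E) : Prop :=
  (1 - ε) * ‖v‖ ^ 2 ≤ ‖Q v‖ ^ 2 ∧ ‖Q v‖ ^ 2 ≤ (1 + ε) * ‖v‖ ^ 2

lemma approxIsometricAt_zero (ε : ℝ) (Q : E →ₗ[ℝ] F) : ApproxIsometricAt ε Q 0 := by
  simp [ApproxIsometricAt]

lemma ApproxIsometricAt.neg {ε : ℝ} {Q : E →ₗ[ℝ] F} {v : E} (h : ApproxIsometricAt ε Q v) :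
    ApproxIsometricAt ε Q (-v) := by
  simpa [ApproxIsometricAt] using h

end ApproxIsometric

lemma exists_forall_of_sum_measureReal_lt_one {Ω α : Type*} [MeasurableSpace Ω]
    {μ : Measure Ω} [IsProbabilityMeasure μ] (s : Finset α) (P : α → Ω → Prop)
    (h : ∑ a ∈ s, μ.real {ω | ¬ P a ω} < 1) : ∃ ω, ∀ a ∈ s, P a ω := by
  by_contra! hP
  have hcover : (⋃ a ∈ s, {ω | ¬ P a ω}) = Set.univ :=
    Set.eq_univ_of_forall fun ω => by simpa using hP ω
  have := measureReal_biUnion_finset_le (μ := μ) s fun a => {ω | ¬ P a ω}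
  rw [hcover, probReal_univ] at this
  linarith

/-- The naive choice `1` instead of this scale would give the upper tail only the exponent
`ε - log (1 + ε) < ε² / 2`. -/
noncomputable def jlScale (ε : ℝ) : ℝ := (log (1 + ε) - log (1 - ε)) / (2 * ε)

section jlScale

variable {ε : ℝ}

lemma one_lt_jlScale_mul_one_add (hε0 : 0 < ε) (hε1 : ε < 1) : 1 < jlScale ε * (1 + ε) := by
  have hplus : ε / (1 + ε) ≤ log (1 + ε) := by
    have := one_sub_inv_le_log_of_pos (show 0 < 1 + ε by linarith)
    rwa [show 1 - (1 + ε)⁻¹ = ε / (1 + ε) by field_simp; ring] at this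
  have hminus : log (1 - ε) ≤ -ε := by
    have := log_le_sub_one_of_pos (show 0 < 1 - ε by linarith); linarith
  rw [jlScale, div_mul_eq_mul_div, one_lt_div (by positivity)]
  have : (1 + ε) * (ε / (1 + ε)) = ε := by field_simp
  nlinarith

lemma jlScale_mul_one_sub_lt_one (hε0 : 0 < ε) (hε1 : ε < 1) : jlScale ε * (1 - ε) < 1 := by
  have hne : 1 - ε ≠ 0 := by linarith
  have hplus : log (1 + ε) ≤ ε := by
    have := log_le_sub_one_of_pos (show 0 < 1 + ε by linarith); linarith
  have hminus : -(ε / (1 - ε)) ≤ log (1 - ε) := by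
    have := one_sub_inv_le_log_of_pos (show 0 < 1 - ε by linarith)
    rwa [show 1 - (1 - ε)⁻¹ = -(ε / (1 - ε)) by field_simp; ring] at this
  rw [jlScale, div_mul_eq_mul_div, div_lt_one (by positivity)]
  have : (1 - ε) * (ε / (1 - ε)) = ε := by field_simp
  nlinarith

lemma jlScale_pos (hε0 : 0 < ε) (hε1 : ε < 1) : 0 < jlScale ε := by
  have := one_lt_jlScale_mul_one_add hε0 hε1
  by_contra! h
  nlinarith

lemma jlScale_exponent_balanced (hε0 : 0 < ε) (hε1 : ε < 1) :
    jlScale ε * (1 + ε) - 1 - log (jlScale ε * (1 + ε)) =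
      jlScale ε * (1 - ε) - 1 - log (jlScale ε * (1 - ε)) := by
  have ha := (jlScale_pos hε0 hε1).ne'
  rw [log_mul ha (by linarith), log_mul ha (by linarith)]
  have : jlScale ε * (2 * ε) = log (1 + ε) - log (1 - ε) := by
    rw [jlScale]; field_simp
  linarith

lemma sq_le_jlScale_exponent_add (hε0 : 0 < ε) (hε1 : ε < 1) :
    ε ^ 2 ≤ (jlScale ε * (1 + ε) - 1 - log (jlScale ε * (1 + ε))) +
      (jlScale ε * (1 - ε) - 1 - log (jlScale ε * (1 - ε))) := by
  have ha := jlScale_pos hε0 hε1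
  rw [log_mul ha.ne' (by linarith), log_mul ha.ne' (by linarith)]
  have hlog_a := log_le_sub_one_of_pos ha
  have hlog_prod : log (1 + ε) + log (1 - ε) ≤ -ε ^ 2 := by
    rw [← log_mul (by linarith) (by linarith)]
    have := log_le_sub_one_of_pos (show 0 < (1 + ε) * (1 - ε) by nlinarith)
    linarith
  linarith

lemma sq_div_two_le_jlScale_exponent (hε0 : 0 < ε) (hε1 : ε < 1) :
    ε ^ 2 / 2 ≤ jlScale ε * (1 - ε) - 1 - log (jlScale ε * (1 - ε)) ∧
      ε ^ 2 / 2 ≤ jlScale ε * (1 + ε) - 1 - log (jlScale ε * (1 + ε)) := by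
  have := jlScale_exponent_balanced hε0 hε1
  have := sq_le_jlScale_exponent_add hε0 hε1
  constructor <;> linarith

end jlScale

/-- For `s ≥ 1/2` both sides are `0`: the integrand is not integrable and `√` of a nonpositive
number is `0`. -/
lemma mgf_sq_gaussianReal (s : ℝ) :
    mgf (fun x => x ^ 2) (gaussianReal 0 1) s = (√(1 - 2 * s))⁻¹ := by
  have hpdf (x : ℝ) : gaussianPDFReal 0 1 x * exp (s * x ^ 2) =
      (√(2 * π))⁻¹ * exp (-(1 / 2 - s) * x ^ 2) := by
    rw [gaussianPDFReal, NNReal.coe_one, mul_one, mul_assoc, ← exp_add]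
    congr 2
    ring
  rw [mgf, integral_gaussianReal_eq_integral_smul one_ne_zero]
  simp_rw [smul_eq_mul, hpdf, integral_const_mul, integral_gaussian]
  rw [← sqrt_inv, ← sqrt_mul (by positivity), ← sqrt_inv]
  congr 1
  field_simp

/-- The Chernoff bound for `∑ᵢ ⟪ωᵢ, u⟫²` at the threshold `c k`, evaluated at its optimal
parameter `s = (1 - c⁻¹) / 2`. -/
lemma exp_mul_inv_sqrt_pow_eq (k : ℕ) {c : ℝ} (hc : 0 < c) :
    exp (-((1 - c⁻¹) / 2) * (c * k)) * (√(1 - 2 * ((1 - c⁻¹) / 2)))⁻¹ ^ k =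
      exp (-(k / 2) * (c - 1 - log c)) := by
  have hsqrt : (√(1 - 2 * ((1 - c⁻¹) / 2)))⁻¹ = exp (log c / 2) := by
    rw [show 1 - 2 * ((1 - c⁻¹) / 2) = c⁻¹ by ring, sqrt_inv, inv_inv, sqrt_eq_rpow,
      rpow_def_of_pos hc]
    ring_nf
  rw [hsqrt, ← exp_nat_mul, ← exp_add]
  congr 1
  field_simp
  ring

section GaussianMatrix

variable {ι : Type*} [Fintype ι] {E : Type*} [NormedAddCommGroup E] [InnerProductSpace ℝ E]

noncomputable def linearMapOfRows (ω : ι → E) : E →ₗ[ℝ] EuclideanSpace ℝ ι :=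
  (WithLp.linearEquiv 2 ℝ (ι → ℝ)).symm.toLinearMap ∘ₗ LinearMap.pi fun i => innerₛₗ ℝ (ω i)

lemma norm_linearMapOfRows_sq (ω : ι → E) (v : E) :
    ‖linearMapOfRows ω v‖ ^ 2 = ∑ i, ⟪ω i, v⟫ ^ 2 := by
  rw [EuclideanSpace.real_norm_sq_eq]
  rfl

noncomputable def jlMap (ε : ℝ) (ω : ι → E) : E →ₗ[ℝ] EuclideanSpace ℝ ι :=
  (√(jlScale ε * Fintype.card ι))⁻¹ • linearMapOfRows ω

variable {ε : ℝ}

lemma sum_inner_sq_eq_norm_sq_mul (ω : ι → E) (v : E) :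
    ∑ i, ⟪ω i, v⟫ ^ 2 = ‖v‖ ^ 2 * ∑ i, ⟪ω i, ‖v‖⁻¹ • v⟫ ^ 2 := by
  rcases eq_or_ne v 0 with rfl | hv
  · simp
  simp only [inner_smul_right, mul_pow, ← Finset.mul_sum]
  field_simp [norm_ne_zero_iff.mpr hv]

lemma approxIsometricAt_jlMap_of_mem_Ioo (hε0 : 0 < ε) {ω : ι → E} {v : E}
    (h : ∑ i, ⟪ω i, ‖v‖⁻¹ • v⟫ ^ 2 ∈ Set.Ioo (jlScale ε * (1 - ε) * Fintype.card ι)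
      (jlScale ε * (1 + ε) * Fintype.card ι)) :
    ApproxIsometricAt ε (jlMap ε ω) v := by
  obtain ⟨hlow, hup⟩ := h
  set a := jlScale ε
  set k : ℝ := (Fintype.card ι : ℝ)
  have hak : 0 < a * k := by
    have : 0 < a * k * (2 * ε) := by linarith
    exact pos_of_mul_pos_left this (by positivity)
  have hnorm : ‖jlMap ε ω v‖ ^ 2 = (a * k)⁻¹ * (‖v‖ ^ 2 * ∑ i, ⟪ω i, ‖v‖⁻¹ • v⟫ ^ 2) := by
    rw [jlMap, LinearMap.smul_apply, norm_smul, mul_pow, norm_linearMapOfRows_sq,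
      sum_inner_sq_eq_norm_sq_mul, norm_inv, norm_of_nonneg (sqrt_nonneg _), inv_pow,
      sq_sqrt hak.le]
  constructor
  · rw [hnorm, le_inv_mul_iff₀ hak]
    nlinarith [mul_le_mul_of_nonneg_left hlow.le (sq_nonneg ‖v‖)]
  · rw [hnorm, inv_mul_le_iff₀ hak]
    nlinarith [mul_le_mul_of_nonneg_left hup.le (sq_nonneg ‖v‖)]

variable [FiniteDimensional ℝ E] [MeasurableSpace E] [BorelSpace E]

lemma stdGaussian_map_inner (u : E) :
    (stdGaussian E).map (fun y => ⟪y, u⟫) = gaussianReal 0 (‖u‖₊ ^ 2) := by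
  have h := IsGaussian.map_eq_gaussianReal (μ := stdGaussian E) (innerSL ℝ u)
  rw [integral_strongDual_stdGaussian, variance_dual_stdGaussian, innerSL_apply_norm] at h
  convert h using 2
  · ext y; simp [real_inner_comm]
  · ext; simp

variable (ι E) in
noncomputable def gaussianMatrix : Measure (ι → E) := Measure.pi fun _ => stdGaussian E

instance : IsProbabilityMeasure (gaussianMatrix ι E) := by
  unfold gaussianMatrix; infer_instance

lemma mgf_sum_inner_sq_gaussianMatrix {u : E} (hu : ‖u‖ = 1) (s : ℝ) :
    mgf (fun ω : ι → E => ∑ i, ⟪ω i, u⟫ ^ 2) (gaussianMatrix ι E) s =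
      (√(1 - 2 * s))⁻¹ ^ Fintype.card ι := by
  have hindep : iIndepFun (fun i (ω : ι → E) => ⟪ω i, u⟫ ^ 2) (gaussianMatrix ι E) :=
    iIndepFun_pi (X := fun _ y => ⟪y, u⟫ ^ 2) fun _ => by fun_prop
  have hrow (i : ι) : (gaussianMatrix ι E).map (fun ω => ⟪ω i, u⟫) = gaussianReal 0 1 := by
    have hcomp : (gaussianMatrix ι E).map (fun ω => ⟪ω i, u⟫) =
        ((gaussianMatrix ι E).map (fun ω => ω i)).map (fun y => ⟪y, u⟫) :=
      (Measure.map_map (g := fun y : E => ⟪y, u⟫) (by fun_prop) (measurable_pi_apply i)).symm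
    rw [hcomp, gaussianMatrix, (measurePreserving_eval _ i).map_eq, stdGaussian_map_inner]
    congr
    ext
    simp [hu]
  rw [← Finset.sum_fn, hindep.mgf_sum (fun _ => by fun_prop), Finset.prod_eq_pow_card
    fun i _ => ?_, Finset.card_univ]
  have hmeas : Measurable fun ω : ι → E => ⟪ω i, u⟫ := by fun_prop
  rw [← mgf_sq_gaussianReal, ← hrow i, mgf_map hmeas.aemeasurable (by fun_prop)]
  rfl

lemma integrable_exp_mul_sum_inner_sq {u : E} (hu : ‖u‖ = 1) {s : ℝ} (hs : s < 1 / 2) :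
    Integrable (fun ω : ι → E => exp (s * ∑ i, ⟪ω i, u⟫ ^ 2)) (gaussianMatrix ι E) :=
  mgf_pos_iff.mp <| by
    rw [mgf_sum_inner_sq_gaussianMatrix hu]
    exact pow_pos (inv_pos.mpr (sqrt_pos.mpr (by linarith))) _

lemma measureReal_le_sum_inner_sq_le {u : E} (hu : ‖u‖ = 1) {c : ℝ} (hc : 1 ≤ c) :
    (gaussianMatrix ι E).real {ω | c * Fintype.card ι ≤ ∑ i, ⟪ω i, u⟫ ^ 2} ≤
      exp (-(Fintype.card ι / 2) * (c - 1 - log c)) := by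
  have hc0 : 0 < c := by linarith
  have hs0 : 0 ≤ (1 - c⁻¹) / 2 := by have := inv_le_one_of_one_le₀ hc; linarith
  have hs : (1 - c⁻¹) / 2 < 1 / 2 := by have := inv_pos.mpr hc0; linarith
  calc _ ≤ _ := measure_ge_le_exp_mul_mgf _ hs0 (integrable_exp_mul_sum_inner_sq hu hs)
    _ = _ := by rw [mgf_sum_inner_sq_gaussianMatrix hu, exp_mul_inv_sqrt_pow_eq _ hc0]

lemma measureReal_sum_inner_sq_le_le {u : E} (hu : ‖u‖ = 1) {c : ℝ} (hc0 : 0 < c) (hc : c ≤ 1) :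
    (gaussianMatrix ι E).real {ω | ∑ i, ⟪ω i, u⟫ ^ 2 ≤ c * Fintype.card ι} ≤
      exp (-(Fintype.card ι / 2) * (c - 1 - log c)) := by
  have hs0 : (1 - c⁻¹) / 2 ≤ 0 := by have := one_le_inv₀ hc0 |>.mpr hc; linarith
  calc _ ≤ _ := measure_le_le_exp_mul_mgf _ hs0
        (integrable_exp_mul_sum_inner_sq hu (by linarith))
    _ = _ := by rw [mgf_sum_inner_sq_gaussianMatrix hu, exp_mul_inv_sqrt_pow_eq _ hc0]

lemma measureReal_not_approxIsometricAt_jlMap_le (hε0 : 0 < ε) (hε1 : ε < 1) (v : E) :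
    (gaussianMatrix ι E).real {ω | ¬ ApproxIsometricAt ε (jlMap ε ω) v} ≤
      2 * exp (-(Fintype.card ι * ε ^ 2 / 4)) := by
  rcases eq_or_ne v 0 with rfl | hv
  · simp only [approxIsometricAt_zero, not_true_eq_false, Set.ofPred_false, measureReal_empty]
    positivity
  set a := jlScale ε
  set k : ℝ := (Fintype.card ι : ℝ)
  have hu : ‖‖v‖⁻¹ • v‖ = 1 := norm_smul_inv_norm hv
  have hbad : {ω : ι → E | ¬ ApproxIsometricAt ε (jlMap ε ω) v} ⊆
      {ω | ∑ i, ⟪ω i, ‖v‖⁻¹ • v⟫ ^ 2 ≤ a * (1 - ε) * k} ∪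
        {ω | a * (1 + ε) * k ≤ ∑ i, ⟪ω i, ‖v‖⁻¹ • v⟫ ^ 2} := by
    intro ω hω
    by_contra hmem
    simp only [Set.mem_union, Set.mem_ofPred_eq, not_or, not_le] at hmem
    exact hω (approxIsometricAt_jlMap_of_mem_Ioo hε0 hmem)
  have hexp {c : ℝ} (hc : ε ^ 2 / 2 ≤ c - 1 - log c) :
      exp (-(k / 2) * (c - 1 - log c)) ≤ exp (-(k * ε ^ 2 / 4)) := by
    gcongr
    nlinarith [mul_le_mul_of_nonneg_left hc (Nat.cast_nonneg (Fintype.card ι) : (0 : ℝ) ≤ k)]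
  obtain ⟨hexp_low, hexp_up⟩ := sq_div_two_le_jlScale_exponent hε0 hε1
  calc _ ≤ _ := measureReal_mono hbad
    _ ≤ _ := measureReal_union_le _ _
    _ ≤ exp (-(k * ε ^ 2 / 4)) + exp (-(k * ε ^ 2 / 4)) := by
      gcongr
      · exact (measureReal_sum_inner_sq_le_le hu (mul_pos (jlScale_pos hε0 hε1) (by linarith))
          (jlScale_mul_one_sub_lt_one hε0 hε1).le).trans (hexp hexp_low)
      · exact (measureReal_le_sum_inner_sq_le hu
          (one_lt_jlScale_mul_one_add hε0 hε1).le).trans (hexp hexp_up)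
    _ = _ := by ring

lemma exists_forall_approxIsometricAt_jlMap_sub {α : Type*} [Fintype α] [LinearOrder α]
    (x : α → E) (hε0 : 0 < ε) (hε1 : ε < 1)
    (h : ((Fintype.card α).choose 2 : ℝ) * (2 * exp (-(Fintype.card ι * ε ^ 2 / 4))) < 1) :
    ∃ ω : ι → E, ∀ i j, ApproxIsometricAt ε (jlMap ε ω) (x i - x j) := by
  obtain ⟨ω, hω⟩ := exists_forall_of_sum_measureReal_lt_one (μ := gaussianMatrix ι E)
    {p : α × α | p.1 < p.2} (fun p ω => ApproxIsometricAt ε (jlMap ε ω) (x p.1 - x p.2)) <| by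
    refine lt_of_le_of_lt ?_ h
    calc _ ≤ ∑ _p ∈ {p : α × α | p.1 < p.2}, 2 * exp (-(Fintype.card ι * ε ^ 2 / 4)) :=
          Finset.sum_le_sum fun p _ => measureReal_not_approxIsometricAt_jlMap_le hε0 hε1 _
      _ = _ := by rw [Finset.sum_const, Fintype.card_product_filter_lt, nsmul_eq_mul]
  refine ⟨ω, fun i j => ?_⟩
  rcases lt_trichotomy i j with hij | rfl | hij
  · exact hω (i, j) (by simpa using hij)
  · simpa using approxIsometricAt_zero ε (jlMap ε ω)
  · rw [← neg_sub]
    exact (hω (j, i) (by simpa using hij)).neg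

end GaussianMatrix

lemma choose_two_mul_two_mul_exp_lt_one {ε : ℝ} (hε0 : 0 < ε) {n r : ℕ}
    (hr : 8 * log n / ε ^ 2 ≤ r) : (n.choose 2 : ℝ) * (2 * exp (-(r * ε ^ 2 / 4))) < 1 := by
  rcases Nat.eq_zero_or_pos n with rfl | hn
  · simp
  have hn' : (1 : ℝ) ≤ n := by exact_mod_cast hn
  have hexp : exp (-(r * ε ^ 2 / 4)) ≤ ((n : ℝ) ^ 2)⁻¹ := by
    rw [← exp_log (by positivity : (0 : ℝ) < (n : ℝ) ^ 2), ← exp_neg, exp_le_exp, log_pow]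
    rw [div_le_iff₀ (by positivity)] at hr
    push_cast
    linarith
  calc (n.choose 2 : ℝ) * (2 * exp (-(r * ε ^ 2 / 4)))
      ≤ n * (n - 1) / 2 * (2 * ((n : ℝ) ^ 2)⁻¹) := by
        rw [Nat.cast_choose_two]
        gcongr
    _ = (n - 1) / n := by field_simp
    _ < 1 := by rw [div_lt_one (by positivity)]; linarith

/-- **Johnson–Lindenstrauss Lemma.** Given `0 < ε < 1` and `n` points `x₁, …, xₙ` in `ℝ^N`,
with `r = ⌈8 (log n)/ε²⌉` there is a linear map `Q : ℝ^N → ℝ^r` that preserves all pairwise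
squared distances up to factors `1 ± ε`. -/
theorem johnson_lindenstrauss (ε : ℝ) (hε0 : 0 < ε) (hε1 : ε < 1)
    (n N : ℕ) (x : Fin n → EuclideanSpace ℝ (Fin N))
    (r : ℕ) (hr : r = ⌈8 * Real.log n / ε ^ 2⌉₊) :
    ∃ Q : EuclideanSpace ℝ (Fin N) →ₗ[ℝ] EuclideanSpace ℝ (Fin r),
      ∀ i j : Fin n,
        (1 - ε) * ‖x i - x j‖ ^ 2 ≤ ‖Q (x i - x j)‖ ^ 2 ∧
        ‖Q (x i - x j)‖ ^ 2 ≤ (1 + ε) * ‖x i - x j‖ ^ 2 := by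
  have hcount := choose_two_mul_two_mul_exp_lt_one hε0 (hr ▸ Nat.le_ceil _ : 8 * log n / ε ^ 2 ≤ r)
  rw [← Fintype.card_fin n, ← Fintype.card_fin r] at hcount
  obtain ⟨ω, hω⟩ := exists_forall_approxIsometricAt_jlMap_sub x hε0 hε1 hcount
  exact ⟨jlMap ε ω, hω⟩
end

section
/- Let M > 0 and let f : [−1,1] × [−1,1] → ℝ be infinitely differentiable in its second argument with sup_{α,β ∈ [−1,1]} |∂^k f/∂β^k (α, β)| ≤ M for every integer k ≥ 0. Let 0 < ε < 1, let α₁, …, α_m, β₁, …, β_n ∈ [−1,1], and let X ∈ ℝ^{m×n} have entries X_{ij} = f(α_i, β_j). Then, with K = max(6, ⌈log₂(2M/ε)⌉), there exists Y ∈ ℝ^{m×n} with rank(Y) ≤ K and ‖X − Y‖_max ≤ ε. In particular, the ε-rank of X is at most max(6, ⌈log₂(2M/ε)⌉), independently of m and n. -/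
open scoped Nat


open scoped Nat

lemma aux_itw_eq {f : ℝ → ℝ} (hf : ContDiff ℝ (⊤ : ℕ∞) f) {s : Set ℝ} (hs : UniqueDiffOn ℝ s)
    (k : ℕ) {x : ℝ} (hx : x ∈ s) :
    iteratedDerivWithin k f s x = iteratedDeriv k f x := by
  have hf' : ContDiff ℝ ((⊤ : ℕ∞) : WithTop ℕ∞) f := hf.of_le (by simp)
  have h : HasFTaylorSeriesUpTo (⊤ : ℕ∞) f (ftaylorSeries ℝ f) := contDiff_iff_ftaylorSeries.mp hf'
  have h2 := (h.hasFTaylorSeriesUpToOn s).eq_iteratedFDerivWithin_of_uniqueDiffOn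
    (m := k) (by exact_mod_cast le_top) hs hx
  rw [iteratedDerivWithin_eq_iteratedFDerivWithin, iteratedDeriv_eq_iteratedFDeriv, ← h2]
  rfl

lemma aux_two_pow_le_fact : ∀ s : ℕ, 5 ≤ s → 2 ^ s ≤ s ! := by
  intro s hs
  induction s with
  | zero => omega
  | succ n ih =>
    rcases Nat.lt_or_ge n 5 with h | h
    · interval_cases n <;> simp_all <;> decide
    · rw [pow_succ, Nat.factorial_succ, mul_comm (n+1)]
      exact Nat.mul_le_mul (ih h) (by omega)

lemma aux_taylor_bound (f : ℝ → ℝ) (hf : ContDiff ℝ (⊤ : ℕ∞) f) (M : ℝ)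
    (hd : ∀ k : ℕ, ∀ x ∈ Set.Icc (-1 : ℝ) 1, |iteratedDeriv k f x| ≤ M) (s : ℕ)
    {x : ℝ} (hx : x ∈ Set.Icc (-1 : ℝ) 1) :
    |f x - ∑ k ∈ Finset.range (s + 1), (k ! : ℝ)⁻¹ * x ^ k * iteratedDeriv k f 0| ≤ M / s ! := by
  have hud : UniqueDiffOn ℝ (Set.Icc (0:ℝ) 1) := uniqueDiffOn_Icc zero_lt_one
  have hsub : Set.Icc (0:ℝ) 1 ⊆ Set.Icc (-1:ℝ) 1 := Set.Icc_subset_Icc (by norm_num) le_rfl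
  -- general claim for function g with derivatives bounded on [-1,1], point in [0,1]
  have key : ∀ g : ℝ → ℝ, ContDiff ℝ (⊤ : ℕ∞) g →
      (∀ k : ℕ, ∀ y ∈ Set.Icc (-1 : ℝ) 1, |iteratedDeriv k g y| ≤ M) →
      ∀ t ∈ Set.Icc (0:ℝ) 1,
      |g t - ∑ k ∈ Finset.range (s + 1), (k ! : ℝ)⁻¹ * t ^ k * iteratedDeriv k g 0| ≤ M / s ! := by
    intro g hg hgd t ht
    have h0 : (0:ℝ) ∈ Set.Icc (0:ℝ) 1 := by norm_num
    have hcd : ContDiffOn ℝ (s + 1 : ℕ) g (Set.Icc (0:ℝ) 1) := (hg.of_le (by exact_mod_cast le_top)).contDiffOn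
    have hb := taylor_mean_remainder_bound (f := g) (a := 0) (b := 1) (C := M) (n := s)
      zero_le_one hcd ht ?_
    · have hpoly : taylorWithinEval g s (Set.Icc (0:ℝ) 1) 0 t
          = ∑ k ∈ Finset.range (s + 1), (k ! : ℝ)⁻¹ * t ^ k * iteratedDeriv k g 0 := by
        rw [taylor_within_apply]
        refine Finset.sum_congr rfl fun k _ => ?_
        rw [aux_itw_eq hg hud k h0]
        simp [smul_eq_mul, mul_assoc]
      rw [hpoly, Real.norm_eq_abs] at hb
      refine hb.trans ?_
      rw [sub_zero]
      have hM0 : 0 ≤ M := le_trans (abs_nonneg _) (hgd 0 0 (by norm_num))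
      have h1 : t ^ (s+1) ≤ 1 := pow_le_one₀ ht.1 (by simpa using ht.2)
      have h2 : M * t ^ (s+1) / s ! ≤ M * 1 / s ! := by gcongr
      simpa using h2
    · intro y hy
      rw [aux_itw_eq hg hud _ hy, Real.norm_eq_abs]
      exact hgd _ _ (hsub hy)
  rcases le_or_gt 0 x with hx0 | hx0
  · exact key f hf hd x ⟨hx0, hx.2⟩
  · -- reflect
    set g : ℝ → ℝ := fun t => f (-t) with hgdef
    have hg : ContDiff ℝ (⊤ : ℕ∞) g := hf.comp contDiff_neg
    have hgd : ∀ k : ℕ, ∀ y ∈ Set.Icc (-1 : ℝ) 1, |iteratedDeriv k g y| ≤ M := by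
      intro k y hy
      rw [hgdef]
      rw [iteratedDeriv_comp_neg]
      rw [smul_eq_mul, abs_mul, abs_pow, abs_neg, abs_one, one_pow, one_mul]
      exact hd k (-y) ⟨by linarith [hy.2], by linarith [hy.1]⟩
    have hmx : -x ∈ Set.Icc (0:ℝ) 1 := ⟨by linarith, by linarith [hx.1]⟩
    have h := key g hg hgd (-x) hmx
    have hgx : g (-x) = f x := by simp [hgdef]
    have hco : ∀ k : ℕ, (k ! : ℝ)⁻¹ * (-x) ^ k * iteratedDeriv k g 0
        = (k ! : ℝ)⁻¹ * x ^ k * iteratedDeriv k f 0 := by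
      intro k
      rw [hgdef, iteratedDeriv_comp_neg, neg_zero, smul_eq_mul, neg_pow]
      ring_nf
      rw [mul_comm k 2, pow_mul]
      norm_num
    rw [hgx] at h
    calc |f x - ∑ k ∈ Finset.range (s + 1), (k ! : ℝ)⁻¹ * x ^ k * iteratedDeriv k f 0|
        = |f x - ∑ k ∈ Finset.range (s + 1), (k ! : ℝ)⁻¹ * (-x) ^ k * iteratedDeriv k g 0| := by
          rw [Finset.sum_congr rfl fun k _ => hco k]
      _ ≤ M / s ! := h



/-- The `ε`-rank of a matrix: the least rank of a matrix approximating `X` entrywise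
within `ε`. -/
noncomputable def epsRank {m n : ℕ} (ε : ℝ) (X : Matrix (Fin m) (Fin n) ℝ) : ℕ :=
  sInf {r : ℕ | ∃ A : Matrix (Fin m) (Fin n) ℝ, A.rank = r ∧ ∀ i j, |X i j - A i j| ≤ ε}

/-- **Smooth scalar latent variable models have bounded `ε`-rank.** If all derivatives of
`f(α, ·)` are bounded by `M` on `[−1,1]`, then any matrix `X i j = f (α i) (β j)` with
latent variables in `[−1,1]` can be approximated entrywise within `ε` by a matrix of rank
at most `K = max(6, ⌈log₂(2M/ε)⌉)`; in particular `rank_ε(X) ≤ K`, independently of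
`m` and `n`. -/
theorem smooth_scalar_LVM_eps_rank (M : ℝ) (hM : 0 < M)
    (f : ℝ → ℝ → ℝ)
    (hsmooth : ∀ α ∈ Set.Icc (-1 : ℝ) 1, ContDiff ℝ (⊤ : ℕ∞) (f α))
    (hderiv : ∀ k : ℕ, ∀ α ∈ Set.Icc (-1 : ℝ) 1, ∀ β ∈ Set.Icc (-1 : ℝ) 1,
      |iteratedDeriv k (f α) β| ≤ M)
    (ε : ℝ) (hε0 : 0 < ε) (hε1 : ε < 1)
    (m n : ℕ) (α : Fin m → ℝ) (β : Fin n → ℝ)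
    (hα : ∀ i, α i ∈ Set.Icc (-1 : ℝ) 1) (hβ : ∀ j, β j ∈ Set.Icc (-1 : ℝ) 1)
    (X : Matrix (Fin m) (Fin n) ℝ) (hX : ∀ i j, X i j = f (α i) (β j))
    (K : ℕ) (hK : K = max 6 ⌈Real.logb 2 (2 * M / ε)⌉₊) :
    (∃ Y : Matrix (Fin m) (Fin n) ℝ,
      Y.rank ≤ K ∧ ∀ i j, |X i j - Y i j| ≤ ε) ∧
    epsRank ε X ≤ K := by

  have main : ∃ Y : Matrix (Fin m) (Fin n) ℝ, Y.rank ≤ K ∧ ∀ i j, |X i j - Y i j| ≤ ε := by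
    have hK6 : 6 ≤ K := hK ▸ le_max_left _ _
    set s : ℕ := K - 1 with hs
    have hKs : K = s + 1 := by omega
    have h2s : (2:ℝ) ^ s ≤ (s ! : ℝ) := by
      exact_mod_cast aux_two_pow_le_fact s (by omega)
    have hch : 2 * M / ε ≤ 2 ^ K := by
      rcases le_or_gt (2 * M / ε) 1 with h | h
      · exact h.trans (one_le_pow₀ (by norm_num))
      · have hceil : (⌈Real.logb 2 (2 * M / ε)⌉₊ : ℝ) ≤ K := by
          exact_mod_cast hK ▸ le_max_right 6 _
        have hlog : Real.logb 2 (2 * M / ε) ≤ (K : ℝ) := (Nat.le_ceil _).trans hceil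
        have h2 := Real.rpow_le_rpow_of_exponent_le (one_le_two) hlog
        rw [Real.rpow_logb two_pos (by norm_num) (by positivity), Real.rpow_natCast] at h2
        exact h2
    have hMε : M ≤ ε * s ! := by
      have h1 : 2 * M ≤ ε * 2 ^ K := by
        rw [div_le_iff₀ hε0] at hch; linarith
      have h2 : M ≤ ε * 2 ^ s := by
        rw [hKs, pow_succ] at h1; nlinarith
      exact h2.trans (by nlinarith)
    set A : Matrix (Fin m) (Fin K) ℝ :=
      fun i k => ((k : ℕ) ! : ℝ)⁻¹ * iteratedDeriv (k : ℕ) (f (α i)) 0 with hA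
    set B : Matrix (Fin K) (Fin n) ℝ := fun k j => β j ^ (k : ℕ) with hB
    refine ⟨A * B, ?_, ?_⟩
    · calc (A * B).rank ≤ B.rank := Matrix.rank_mul_le_right A B
        _ ≤ Fintype.card (Fin K) := B.rank_le_card_height
        _ = K := Fintype.card_fin K
    · intro i j
      have hYij : (A * B) i j
          = ∑ k ∈ Finset.range (s + 1), (k ! : ℝ)⁻¹ * β j ^ k * iteratedDeriv k (f (α i)) 0 := by
        rw [Matrix.mul_apply, ← hKs, ← Fin.sum_univ_eq_sum_range
          (fun k => (k ! : ℝ)⁻¹ * β j ^ k * iteratedDeriv k (f (α i)) 0) K]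
        exact Finset.sum_congr rfl fun k _ => by rw [hA, hB]; ring
      rw [hYij, hX]
      exact (aux_taylor_bound (f (α i)) (hsmooth _ (hα i)) M
        (fun k x hx => hderiv k _ (hα i) x hx) s (hβ j)).trans
        (by rw [div_le_iff₀ (by positivity)]; linarith [hMε, mul_comm ε ((s ! : ℕ) : ℝ)])
  refine ⟨main, ?_⟩
  obtain ⟨Y, hYr, hYe⟩ := main
  exact le_trans (Nat.sInf_le ⟨Y, rfl, hYe⟩) hYr
end

section
/- Let N ≥ 1 be an integer, C ≥ 0, M ≥ 0, and let (a_μ)_{μ ∈ ℕ^N} be a family of real numbers indexed by multi-indices such that |a_μ| ≤ C·M^{|μ|} for every μ. Then Σ_{μ ∈ ℕ^N} a_μ²/μ! ≤ C²·Σ_{s=0}^∞ (N+s)^N·M^{2s}/(⌊s/N⌋)!, and in particular the left-hand sum is finite. -/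
/-!
Since `⌊|μ|/N⌋ ≤ max_i μ_i`, we have `⌊|μ|/N⌋! ≤ μ!`, so `a_μ²/μ! ≤ C² M^{2|μ|}/⌊|μ|/N⌋!`
depends on `|μ|` only, and at most `(s+1)^N ≤ (N+s)^N` multi-indices have `|μ| = s`. Grouping
any finite partial sum of the left-hand side by `|μ|` therefore bounds it by the right-hand
series, which converges because `(N+s)^N ≤ N! e^{N+s}`.
-/

open Finset

theorem summable_and_tsum_le_of_sum_le_on_fibers {α β : Type*} {f : α → ℝ} {g : β → ℝ}
    (σ : α → β) (hf : 0 ≤ f) (hg : Summable g)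
    (hfib : ∀ b (T : Finset α), (∀ x ∈ T, σ x = b) → ∑ x ∈ T, f x ≤ g b) :
    Summable f ∧ ∑' x, f x ≤ ∑' b, g b := by
  classical
  have hg0 : 0 ≤ g := fun b => by simpa using hfib b ∅ (by simp)
  have hsum : ∀ T : Finset α, ∑ x ∈ T, f x ≤ ∑' b, g b := fun T =>
    calc ∑ x ∈ T, f x = ∑ b ∈ T.image σ, ∑ x ∈ T with σ x = b, f x :=
          (sum_fiberwise_of_maps_to (fun x hx => mem_image_of_mem σ hx) f).symm
      _ ≤ ∑ b ∈ T.image σ, g b :=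
          sum_le_sum fun b _ => hfib b _ fun x hx => (mem_filter.1 hx).2
      _ ≤ ∑' b, g b := hg.sum_le_tsum _ fun b _ => hg0 b
  exact ⟨summable_of_sum_le hf hsum, Real.tsum_le_of_sum_le hf hsum⟩

-- Writing `s = qN + r`, the series is the product of `∑_q (x^N)^q/q!` with a finite sum over `r`.
theorem summable_pow_div_factorial_div (x : ℝ) (N : ℕ) [NeZero N] :
    Summable fun s : ℕ => x ^ s / (s / N).factorial := by
  have hprod : Summable fun p : ℕ × Fin N => (x ^ N) ^ p.1 / p.1.factorial * x ^ (p.2 : ℕ) :=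
    summable_mul_of_summable_norm (f := fun q : ℕ => (x ^ N) ^ q / q.factorial)
      (g := fun r : Fin N => x ^ (r : ℕ)) (Real.summable_pow_div_factorial _).norm .of_finite
  refine (Nat.divModEquiv N).symm.summable_iff.mp (hprod.congr fun p => ?_)
  simp only [Function.comp_apply, Nat.divModEquiv_symm_apply]
  rw [Nat.add_comm, Nat.add_mul_div_right _ _ (NeZero.pos N), Nat.div_eq_of_lt p.2.is_lt,
    zero_add, pow_add, pow_mul']
  ring

theorem summable_cast_add_pow_mul_pow_div_factorial_div (k N : ℕ) [NeZero N] (x : ℝ) :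
    Summable fun s : ℕ => ((k + s : ℕ) : ℝ) ^ k * x ^ s / (s / N).factorial := by
  refine .of_norm_bounded
    ((summable_pow_div_factorial_div (Real.exp 1 * |x|) N).mul_left (k.factorial * Real.exp k))
    fun s => ?_
  have hexp : ((k + s : ℕ) : ℝ) ^ k ≤ k.factorial * (Real.exp k * Real.exp 1 ^ s) := by
    rw [← Real.exp_nat_mul, mul_one, ← Real.exp_add, ← Nat.cast_add]
    exact (div_le_iff₀' (by positivity)).1 (Real.pow_div_factorial_le_exp _ (Nat.cast_nonneg _) k)
  rw [Real.norm_eq_abs, abs_div, abs_mul, abs_pow, abs_pow, Nat.abs_cast, Nat.abs_cast, mul_pow]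
  calc ((k + s : ℕ) : ℝ) ^ k * |x| ^ s / (s / N).factorial
      ≤ k.factorial * (Real.exp k * Real.exp 1 ^ s) * |x| ^ s / (s / N).factorial := by gcongr
    _ = _ := by ring

section

variable {ι : Type*} [Fintype ι]

theorem factorial_sum_div_card_le_prod_factorial (μ : ι → ℕ) :
    ((∑ i, μ i) / Fintype.card ι).factorial ≤ ∏ i, (μ i).factorial := by
  rcases isEmpty_or_nonempty ι with hι | hι
  · simp
  obtain ⟨j, -, hj⟩ := exists_max_image univ μ univ_nonempty
  have hdiv : (∑ i, μ i) / Fintype.card ι ≤ μ j :=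
    Nat.div_le_of_le_mul ((sum_le_card_nsmul _ _ _ fun i _ => hj i (mem_univ i)).trans (by simp))
  exact (Nat.factorial_le hdiv).trans
    (single_le_prod' (f := fun i => (μ i).factorial) (fun i _ => (μ i).factorial_pos) (mem_univ j))

theorem card_le_of_sum_eq {s : ℕ} {T : Finset (ι → ℕ)} (hT : ∀ μ ∈ T, ∑ i, μ i = s) :
    #T ≤ (s + 1) ^ Fintype.card ι := by
  classical
  calc #T ≤ #(Iic fun _ => s) := card_le_card fun μ hμ => mem_Iic.2 fun i =>
        hT μ hμ ▸ single_le_sum (fun j _ => Nat.zero_le (μ j)) (mem_univ i)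
    _ = (s + 1) ^ Fintype.card ι := by simp [Pi.card_Iic]

variable {C M : ℝ}

theorem sq_div_prod_factorial_le {x : ℝ} {μ : ι → ℕ} (h : |x| ≤ C * M ^ ∑ i, μ i) :
    x ^ 2 / ∏ i, ((μ i).factorial : ℝ) ≤
      C ^ 2 * M ^ (2 * ∑ i, μ i) / ((∑ i, μ i) / Fintype.card ι).factorial := by
  have hsq : x ^ 2 ≤ C ^ 2 * M ^ (2 * ∑ i, μ i) := by
    rw [pow_mul', ← mul_pow]
    exact sq_le_sq.2 (h.trans (le_abs_self _))
  have hfact : (((∑ i, μ i) / Fintype.card ι).factorial : ℝ) ≤ ∏ i, ((μ i).factorial : ℝ) := by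
    exact_mod_cast factorial_sum_div_card_le_prod_factorial μ
  exact div_le_div₀ ((sq_nonneg x).trans hsq) hsq (by positivity) hfact

theorem sum_sq_div_prod_factorial_le_of_sum_eq {a : (ι → ℕ) → ℝ}
    (ha : ∀ μ, |a μ| ≤ C * M ^ ∑ i, μ i) {s : ℕ} {T : Finset (ι → ℕ)}
    (hT : ∀ μ ∈ T, ∑ i, μ i = s) :
    ∑ μ ∈ T, a μ ^ 2 / ∏ i, ((μ i).factorial : ℝ) ≤
      (s + 1) ^ Fintype.card ι * (C ^ 2 * M ^ (2 * s) / (s / Fintype.card ι).factorial) :=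
  calc ∑ μ ∈ T, a μ ^ 2 / ∏ i, ((μ i).factorial : ℝ)
      ≤ ∑ _μ ∈ T, C ^ 2 * M ^ (2 * s) / (s / Fintype.card ι).factorial :=
        sum_le_sum fun μ hμ => hT μ hμ ▸ sq_div_prod_factorial_le (ha μ)
    _ = #T * (C ^ 2 * M ^ (2 * s) / (s / Fintype.card ι).factorial) := by
        rw [sum_const, nsmul_eq_mul]
    _ ≤ _ := by
        gcongr
        · rw [pow_mul]; positivity
        · exact_mod_cast card_le_of_sum_eq hT

end

theorem weighted_coeff_sum_bound_general (N : ℕ) (hN : 1 ≤ N) (C M : ℝ)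
    (a : (Fin N → ℕ) → ℝ) (ha : ∀ μ : Fin N → ℕ, |a μ| ≤ C * M ^ (∑ i, μ i)) :
    Summable (fun μ : Fin N → ℕ => (a μ) ^ 2 / ∏ i, ((μ i).factorial : ℝ)) ∧
    (∑' μ : Fin N → ℕ, (a μ) ^ 2 / ∏ i, ((μ i).factorial : ℝ)) ≤
      C ^ 2 * ∑' s : ℕ, ((N + s : ℕ) : ℝ) ^ N * M ^ (2 * s) / ((s / N).factorial : ℝ) := by
  have : NeZero N := NeZero.of_pos hN
  have hg : Summable fun s : ℕ =>
      C ^ 2 * (((N + s : ℕ) : ℝ) ^ N * M ^ (2 * s) / (s / N).factorial) := by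
    simpa only [pow_mul] using
      (summable_cast_add_pow_mul_pow_div_factorial_div N N (M ^ 2)).mul_left (C ^ 2)
  refine (summable_and_tsum_le_of_sum_le_on_fibers (fun μ => ∑ i, μ i)
    (fun μ => div_nonneg (sq_nonneg _) (by positivity)) hg ?_).imp_right (·.trans_eq tsum_mul_left)
  intro s T hT
  have hsN : (s : ℝ) + 1 ≤ (N + s : ℕ) := by exact_mod_cast (by omega : s + 1 ≤ N + s)
  have hterm : 0 ≤ C ^ 2 * M ^ (2 * s) / (s / N).factorial := by rw [pow_mul]; positivity
  calc _ ≤ _ := sum_sq_div_prod_factorial_le_of_sum_eq ha hT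
    _ ≤ ((N + s : ℕ) : ℝ) ^ N * (C ^ 2 * M ^ (2 * s) / (s / N).factorial) := by
        rw [Fintype.card_fin]; gcongr
    _ = _ := by ring

/-- If `|a_μ| ≤ C M^{|μ|}` for every multi-index `μ ∈ ℕ^N`, then
`Σ_μ a_μ²/μ! ≤ C² Σ_{s=0}^∞ (N+s)^N M^{2s}/⌊s/N⌋!`; in particular the left-hand sum is
finite. -/
theorem weighted_coeff_sum_bound (N : ℕ) (hN : 1 ≤ N) (C M : ℝ) (hC : 0 ≤ C) (hM : 0 ≤ M)
    (a : (Fin N → ℕ) → ℝ) (ha : ∀ μ : Fin N → ℕ, |a μ| ≤ C * M ^ (∑ i, μ i)) :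
    Summable (fun μ : Fin N → ℕ => (a μ) ^ 2 / ∏ i, ((μ i).factorial : ℝ)) ∧
    (∑' μ : Fin N → ℕ, (a μ) ^ 2 / ∏ i, ((μ i).factorial : ℝ)) ≤
      C ^ 2 * ∑' s : ℕ, ((N + s : ℕ) : ℝ) ^ N * M ^ (2 * s) / ((s / N).factorial : ℝ) :=
  weighted_coeff_sum_bound_general N hN C M a ha
end
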